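/- arXiv:2507.20167 — 2 statements merged into one kernel-verified Lean document; each statement's English description precedes it below -/
import Mathlib

section
/- For all integers a, b ≥ 1, every integer n ≥ 0 and every real x: T^{(a,b)}_{n,λ}(x) = Σ_{k=0}^{n} C(n,k)·T^{(a−1,b)}_{k,λ}(0)·β_{n−k,λ}(x) = Σ_{k=0}^{n} C(n,k)·T^{(a,b−1)}_{k,λ}(0)·E_{n−k,λ}(x). -/
open Finset PowerSeries

noncomputable def dff (lam x : ℝ) (n : ℕ) : ℝ := ∏ i ∈ Finset.range n, (x - i * lam)

noncomputable def degExp (lam x : ℝ) : PowerSeries ℝ :=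
  PowerSeries.mk fun k => dff lam x k / k.factorial

/-! The series `(e_λ(t) - 1)^a (e_λ(t) + 1)^b` is nonzero, so it can be cancelled over the domain
`ℝ⟦t⟧`. Multiplied by it, both the exponential generating function of `T^{(a,b)}(x)` and the
product of those of `T^{(a-1,b)}(0)` and `β(x)` (resp. `T^{(a,b-1)}(0)` and `E(x)`) become
`2^b t^a e_λ^x(t)` by the defining identities. Coefficients of such products are binomial
convolutions. -/

section ExponentialGeneratingFunction

variable {K : Type*} [Field K] [CharZero K]

noncomputable def egf (f : ℕ → K) : PowerSeries K :=
  PowerSeries.mk fun n => f n / n.factorial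

theorem egf_mul (f g : ℕ → K) :
    egf f * egf g
      = egf fun n => ∑ k ∈ range (n + 1), (n.choose k : K) * f k * g (n - k) := by
  ext n
  rw [coeff_mul, Nat.sum_antidiagonal_eq_sum_range_succ_mk]
  simp only [egf, coeff_mk, sum_div]
  refine sum_congr rfl fun k hk => ?_
  have hkn : k ≤ n := Nat.lt_succ_iff.1 (mem_range.1 hk)
  have hn : (n.factorial : K) ≠ 0 := Nat.cast_ne_zero.2 n.factorial_ne_zero
  rw [Nat.cast_choose K hkn]
  field_simp

theorem egf_injective : Function.Injective (egf : (ℕ → K) → PowerSeries K) := by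
  intro f g h
  funext n
  have hn := congrArg (coeff n) h
  simp only [egf, coeff_mk] at hn
  exact (div_left_inj' (Nat.cast_ne_zero.2 n.factorial_ne_zero)).1 hn

theorem eq_sum_choose_mul_of_egf_eq_mul {f g h : ℕ → K} (hfgh : egf f = egf g * egf h) (n : ℕ) :
    f n = ∑ k ∈ range (n + 1), (n.choose k : K) * g k * h (n - k) := by
  rw [egf_mul] at hfgh
  exact congrFun (egf_injective hfgh) n

end ExponentialGeneratingFunction

theorem eq_mul_of_mul_eq_mul_mul {M : Type*} [CommMonoidWithZero M] [IsCancelMulZero M]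
    {F G H p q P Q : M}
    (hpq : p * q ≠ 0) (hF : F * (p * q) = P * Q) (hG : G * p = P) (hH : H * q = Q) :
    F = G * H :=
  mul_right_cancel₀ hpq (by rw [hF, ← hG, ← hH, mul_mul_mul_comm])

theorem degExp_zero (lam : ℝ) : degExp lam 0 = 1 := by
  ext k
  rcases k with _ | k
  · simp [degExp, dff]
  · have hdff : dff lam 0 (k + 1) = 0 :=
      prod_eq_zero (mem_range.2 k.succ_pos) (by simp)
    simp [degExp, hdff]

theorem degExp_one_sub_one_ne_zero (lam : ℝ) : degExp lam 1 - 1 ≠ 0 := by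
  intro h
  simpa [degExp, dff] using congrArg (coeff 1) h

theorem degExp_one_add_one_ne_zero (lam : ℝ) : degExp lam 1 + 1 ≠ 0 := by
  intro h
  simpa [degExp, dff] using congrArg (coeff 0) h

theorem stmt6_general (lam : ℝ)
    (B E : ℝ → ℕ → ℝ) (T : ℕ → ℕ → ℝ → ℕ → ℝ)
    (hB : ∀ x, (PowerSeries.mk fun n => B x n / n.factorial) * (degExp lam 1 - 1)
        = (PowerSeries.X : PowerSeries ℝ) * degExp lam x)
    (hE : ∀ x, (PowerSeries.mk fun n => E x n / n.factorial) * (degExp lam 1 + 1)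
        = 2 * degExp lam x)
    (hT : ∀ a b x, (PowerSeries.mk fun n => T a b x n / n.factorial)
          * (degExp lam 1 - 1) ^ a * (degExp lam 1 + 1) ^ b
        = (2 : PowerSeries ℝ) ^ b * (PowerSeries.X : PowerSeries ℝ) ^ a * degExp lam x)
    (a b : ℕ) (ha : 1 ≤ a) (hb : 1 ≤ b) (n : ℕ) (x : ℝ) :
    T a b x n = ∑ k ∈ Finset.range (n + 1), (n.choose k : ℝ) * T (a - 1) b 0 k * B x (n - k)
    ∧ T a b x n
      = ∑ k ∈ Finset.range (n + 1), (n.choose k : ℝ) * T a (b - 1) 0 k * E x (n - k) := by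
  obtain ⟨a, rfl⟩ := Nat.exists_eq_add_of_le' ha
  obtain ⟨b, rfl⟩ := Nat.exists_eq_add_of_le' hb
  set u := degExp lam 1 - 1
  set v := degExp lam 1 + 1
  have hu : u ≠ 0 := degExp_one_sub_one_ne_zero lam
  have hv : v ≠ 0 := degExp_one_add_one_ne_zero lam
  have hT0 (a b : ℕ) : egf (T a b 0) * (u ^ a * v ^ b) = 2 ^ b * X ^ a := by
    rw [← mul_assoc, ← mul_one (_ * X ^ a), ← degExp_zero lam]
    exact hT a b 0
  have hTx : egf (T (a + 1) (b + 1) x) * (u ^ (a + 1) * v ^ (b + 1))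
      = 2 ^ (b + 1) * X ^ (a + 1) * degExp lam x := by
    rw [← mul_assoc]; exact hT _ _ x
  refine ⟨eq_sum_choose_mul_of_egf_eq_mul ?_ n, eq_sum_choose_mul_of_egf_eq_mul ?_ n⟩
  · refine eq_mul_of_mul_eq_mul_mul (by positivity) ?_ (hT0 a (b + 1)) (hB x)
    linear_combination hTx
  · refine eq_mul_of_mul_eq_mul_mul (by positivity) ?_ (hT0 (a + 1) b) (hE x)
    linear_combination hTx

theorem stmt6 (lam : ℝ) (hlam : lam ≠ 0)
    (B E : ℝ → ℕ → ℝ) (T : ℕ → ℕ → ℝ → ℕ → ℝ)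
    (hB : ∀ x, (PowerSeries.mk fun n => B x n / n.factorial) * (degExp lam 1 - 1)
        = (PowerSeries.X : PowerSeries ℝ) * degExp lam x)
    (hE : ∀ x, (PowerSeries.mk fun n => E x n / n.factorial) * (degExp lam 1 + 1)
        = 2 * degExp lam x)
    (hT : ∀ a b x, (PowerSeries.mk fun n => T a b x n / n.factorial)
          * (degExp lam 1 - 1) ^ a * (degExp lam 1 + 1) ^ b
        = (2 : PowerSeries ℝ) ^ b * (PowerSeries.X : PowerSeries ℝ) ^ a * degExp lam x)
    (a b : ℕ) (ha : 1 ≤ a) (hb : 1 ≤ b) (n : ℕ) (x : ℝ) :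
    T a b x n = ∑ k ∈ Finset.range (n + 1), (n.choose k : ℝ) * T (a - 1) b 0 k * B x (n - k)
    ∧ T a b x n
      = ∑ k ∈ Finset.range (n + 1), (n.choose k : ℝ) * T a (b - 1) 0 k * E x (n - k) :=
  stmt6_general lam B E T hB hE hT a b ha hb n x
end

section
/- Let Y be a random variable uniformly distributed on [0,1], so that E[(Y)_{n,λ}] = ∫_0^1 (y)_{n,λ} dy for every n ≥ 0. Then for every integer n ≥ 0 and every real x: S^Y_{n,λ}(x) = Σ_{k=0}^{n} C(n,k)·β_{k,λ}(x)·(−λ)^{n−k}·(n−k)!/(n−k+1). -/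
/-!
Write `ℓ(t) = log (1 + λt) / λ`, so that `e_λ^y(t) = exp (y ℓ(t))` and hence `∂_y e_λ^y = ℓ e_λ^y`
coefficientwise. Integrating over `y ∈ [0, 1]` turns this into `M ℓ = e_λ(t) - 1`, where `M` is the
moment series of the uniform distribution. Then `t e_λ^x = B (e_λ - 1) = B ℓ M` and `S M = e_λ^x`,
so cancelling `M` and `t` gives `S = B (ℓ / t)`; the theorem is the coefficient of `t^n / n!` of this
identity, with `ℓ / t = ∑ (-λ)^m t^m / (m + 1)`.
-/

open Finset PowerSeries

open Nat

lemma dff_succ (lam x : ℝ) (n : ℕ) : dff lam x (n + 1) = dff lam x n * (x - n * lam) :=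
  prod_range_succ _ _

lemma dff_zero_succ (lam : ℝ) (n : ℕ) : dff lam 0 (n + 1) = 0 :=
  prod_eq_zero (mem_range.mpr n.succ_pos) (by simp)

lemma continuous_dff (lam : ℝ) (n : ℕ) : Continuous fun y => dff lam y n :=
  continuous_finsetProd _ fun _ _ => by fun_prop

lemma coeff_degExp (lam x : ℝ) (n : ℕ) : coeff n (degExp lam x) = dff lam x n / n ! :=
  coeff_mk _ _

lemma succ_mul_coeff_degExp_succ (lam x : ℝ) (n : ℕ) :
    (n + 1) * coeff (n + 1) (degExp lam x) = (x - n * lam) * coeff n (degExp lam x) := by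
  rw [coeff_degExp, coeff_degExp, dff_succ, factorial_succ]
  push_cast
  field_simp

/-- `X * degLog lam` is the series of `log (1 + lam * t) / lam`. -/
noncomputable def degLog (lam : ℝ) : ℝ⟦X⟧ := PowerSeries.mk fun j => (-lam) ^ j / (j + 1)

lemma succ_mul_coeff_degLog (lam : ℝ) (j : ℕ) : (j + 1) * coeff j (degLog lam) = (-lam) ^ j := by
  rw [degLog, coeff_mk]
  field_simp

-- `succ_mul_coeff_degExp_succ` differentiated in `x`, with `coeff n (degExp lam x * degLog lam)`
-- in place of the derivative of `coeff (n + 1) (degExp lam x)`.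
lemma coeff_degExp_mul_degLog_succ (lam x : ℝ) (n : ℕ) :
    (n + 2) * coeff (n + 1) (degExp lam x * degLog lam)
      = (x - (n + 1) * lam) * coeff n (degExp lam x * degLog lam)
        + coeff (n + 1) (degExp lam x) := by
  set a := fun i => coeff i (degExp lam x)
  set b := fun j => coeff j (degLog lam)
  simp only [coeff_mul]
  calc (n + 2 : ℝ) * ∑ p ∈ antidiagonal (n + 1), a p.1 * b p.2
      = ∑ p ∈ antidiagonal (n + 1), (p.1 * a p.1 * b p.2 + a p.1 * ((p.2 + 1) * b p.2)) := by
        rw [mul_sum]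
        refine sum_congr rfl fun p hp => ?_
        have hp : (p.1 : ℝ) + p.2 = n + 1 := by exact_mod_cast mem_antidiagonal.mp hp
        linear_combination -(a p.1 * b p.2) * hp
    _ = ∑ p ∈ antidiagonal n, ((p.1 + 1) * a (p.1 + 1) * b p.2 + a p.1 * (-lam) ^ (p.2 + 1))
          + a (n + 1) := by
        rw [sum_add_distrib, Nat.sum_antidiagonal_succ, Nat.sum_antidiagonal_succ', sum_add_distrib]
        simp only [a, b, succ_mul_coeff_degLog]
        push_cast
        ring
    _ = (x - (n + 1) * lam) * ∑ p ∈ antidiagonal n, a p.1 * b p.2 + a (n + 1) := by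
        rw [mul_sum]
        congr 1
        refine sum_congr rfl fun p hp => ?_
        have hp : (p.1 : ℝ) + p.2 = n := by exact_mod_cast mem_antidiagonal.mp hp
        rw [succ_mul_coeff_degExp_succ, pow_succ, ← succ_mul_coeff_degLog]
        linear_combination -(lam * a p.1 * b p.2) * hp

lemma hasDerivAt_coeff_degExp (lam x : ℝ) (n : ℕ) :
    HasDerivAt (fun y => coeff (n + 1) (degExp lam y)) (coeff n (degExp lam x * degLog lam)) x := by
  induction n generalizing x with
  | zero =>
    simpa [degExp, dff, degLog] using hasDerivAt_id' x
  | succ n ih =>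
    have hrec : (fun y => coeff (n + 2) (degExp lam y))
        = fun y => (y - (n + 1) * lam) * coeff (n + 1) (degExp lam y) / (n + 2) := by
      funext y
      have := succ_mul_coeff_degExp_succ lam y (n + 1)
      push_cast at this
      rw [eq_div_iff (by positivity)]
      linear_combination this
    rw [hrec]
    refine ((((hasDerivAt_id' x).sub_const _).mul (ih x)).div_const ((n : ℝ) + 2)).congr_deriv ?_
    rw [div_eq_iff (by positivity)]
    linear_combination -coeff_degExp_mul_degLog_succ lam x n

lemma continuous_coeff_degExp (lam : ℝ) (n : ℕ) : Continuous fun y => coeff n (degExp lam y) := by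
  simp only [coeff_degExp]
  exact (continuous_dff lam n).div_const _

lemma intervalIntegral_coeff_mul {F : ℝ → ℝ⟦X⟧} {a b : ℝ}
    (hF : ∀ k, IntervalIntegrable (fun y => coeff k (F y)) MeasureTheory.volume a b)
    (G : ℝ⟦X⟧) (n : ℕ) :
    ∫ y in a..b, coeff n (F y * G)
      = coeff n ((PowerSeries.mk fun k => ∫ y in a..b, coeff k (F y)) * G) := by
  simp only [coeff_mul, coeff_mk]
  rw [intervalIntegral.integral_finsetSum fun p _ => (hF p.1).mul_const _]
  simp only [intervalIntegral.integral_mul_const]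

lemma X_mul_uniformMoments_mul_degLog (lam : ℝ) :
    X * ((PowerSeries.mk fun n => (∫ y in (0:ℝ)..1, dff lam y n) / n !) * degLog lam)
      = degExp lam 1 - 1 := by
  have hmoments : (PowerSeries.mk fun n => (∫ y in (0:ℝ)..1, dff lam y n) / n !)
      = PowerSeries.mk fun n => ∫ y in (0:ℝ)..1, coeff n (degExp lam y) := by
    ext n
    simp only [coeff_mk, coeff_degExp, intervalIntegral.integral_div]
  have hint (k : ℕ) :
      IntervalIntegrable (fun y => coeff k (degExp lam y)) MeasureTheory.volume 0 1 :=
    (continuous_coeff_degExp lam k).intervalIntegrable 0 1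
  ext (_ | n)
  · simp [degExp, dff]
  · have hderiv_cont : Continuous fun y => coeff n (degExp lam y * degLog lam) := by
      simp only [coeff_mul]
      exact continuous_finsetSum _ fun p _ =>
        (continuous_coeff_degExp lam p.1).mul continuous_const
    rw [coeff_succ_X_mul, hmoments, ← intervalIntegral_coeff_mul hint,
      intervalIntegral.integral_eq_sub_of_hasDerivAt (fun y _ => hasDerivAt_coeff_degExp lam y n)
        (hderiv_cont.intervalIntegrable 0 1)]
    simp [coeff_degExp, dff_zero_succ]

lemma coeff_egf_mul_mul_factorial (f : ℕ → ℝ) (G : ℝ⟦X⟧) (n : ℕ) :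
    coeff n ((PowerSeries.mk fun k => f k / k !) * G) * n !
      = ∑ k ∈ range (n + 1), n.choose k * f k * (coeff (n - k) G * (n - k) !) := by
  rw [coeff_mul, Finset.Nat.sum_antidiagonal_eq_sum_range_succ_mk, sum_mul]
  refine sum_congr rfl fun k hk => ?_
  rw [coeff_mk, ← Nat.choose_mul_factorial_mul_factorial (Nat.lt_succ_iff.mp (mem_range.mp hk))]
  push_cast
  field_simp

theorem stmt11_general (lam : ℝ)
    (B : ℝ → ℕ → ℝ)
    (hB : ∀ x, (PowerSeries.mk fun n => B x n / n.factorial) * (degExp lam 1 - 1)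
        = (PowerSeries.X : PowerSeries ℝ) * degExp lam x)
    (S : ℝ → ℕ → ℝ)
    (hS : ∀ x, (PowerSeries.mk fun n => S x n / n.factorial) *
        (PowerSeries.mk fun n => (∫ y in (0:ℝ)..1, dff lam y n) / n.factorial)
          = degExp lam x)
    (n : ℕ) (x : ℝ) :
    S x n = ∑ k ∈ Finset.range (n + 1),
      (n.choose k : ℝ) * B x k * ((-lam) ^ (n - k) * (n - k).factorial / (n - k + 1)) := by
  set M := PowerSeries.mk fun n => (∫ y in (0:ℝ)..1, dff lam y n) / n.factorial
  have hM : M ≠ 0 := fun h => by simpa [M, dff] using congrArg (coeff 0) h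
  have hSB : (PowerSeries.mk fun n => S x n / n.factorial)
      = (PowerSeries.mk fun n => B x n / n.factorial) * degLog lam := by
    refine mul_right_cancel₀ hM (mul_left_cancel₀ X_ne_zero ?_)
    linear_combination X * hS x - hB x
      - (PowerSeries.mk fun n => B x n / n.factorial) * X_mul_uniformMoments_mul_degLog lam
  have hcoeff := congrArg (fun f => coeff n f * (n ! : ℝ)) hSB
  rw [coeff_mk, div_mul_cancel₀ _ (by positivity)] at hcoeff
  rw [hcoeff, coeff_egf_mul_mul_factorial]
  refine sum_congr rfl fun k hk => ?_
  rw [degLog, coeff_mk, Nat.cast_sub (Nat.lt_succ_iff.mp (mem_range.mp hk))]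
  ring

theorem stmt11 (lam : ℝ) (hlam : lam ≠ 0)
    (B : ℝ → ℕ → ℝ)
    (hB : ∀ x, (PowerSeries.mk fun n => B x n / n.factorial) * (degExp lam 1 - 1)
        = (PowerSeries.X : PowerSeries ℝ) * degExp lam x)
    (S : ℝ → ℕ → ℝ)
    (hS : ∀ x, (PowerSeries.mk fun n => S x n / n.factorial) *
        (PowerSeries.mk fun n => (∫ y in (0:ℝ)..1, dff lam y n) / n.factorial)
          = degExp lam x)
    (n : ℕ) (x : ℝ) :
    S x n = ∑ k ∈ Finset.range (n + 1),
      (n.choose k : ℝ) * B x k * ((-lam) ^ (n - k) * (n - k).factorial / (n - k + 1)) :=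
  stmt11_general lam B hB S hS n x
end
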